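/- arXiv:1707.09745 — 4 statements merged into one kernel-verified Lean document; each statement's English description precedes it below -/
import Mathlib

section
/- (Vertex-cut Bound) For every connected simple graph G and every vertex cut S of G, if H_1, H_2, …, H_p are the connected components of G − S, then the undirected optical index satisfies w(G) ≥ (Σ_{i<j} |H_i|·|H_j|) / ⌊|[S, V(G)\S]|/2⌋, where [S, V(G)\S] is the set of edges with one endpoint in S and the other outside S. -/
open SimpleGraph

/-- An all-to-all routing in a simple graph `G`: a choice of one path between each
(unordered) pair of vertices. -/
structure Routing {V : Type*} (G : SimpleGraph V) where
  path : ∀ u v : V, G.Walk u v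
  isPath : ∀ u v : V, (path u v).IsPath
  symm : ∀ u v : V, path v u = (path u v).reverse

/-- The conflict graph of a routing: vertices are unordered pairs of distinct vertices of `G`
(i.e. the paths of the routing), two of them adjacent iff the corresponding paths share an
edge. -/
def Routing.conflictGraph {V : Type*} {G : SimpleGraph V} (R : Routing G) :
    SimpleGraph {p : Sym2 V // ¬ p.IsDiag} where
  Adj p q := p ≠ q ∧ ∃ (u v u' v' : V) (e : Sym2 V),
      (p : Sym2 V) = s(u, v) ∧ (q : Sym2 V) = s(u', v') ∧
      e ∈ (R.path u v).edges ∧ e ∈ (R.path u' v').edges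
  symm := by
    constructor
    rintro p q ⟨hne, u, v, u', v', e, hp, hq, h1, h2⟩
    exact ⟨hne.symm, u', v', u, v, e, hq, hp, h2, h1⟩
  loopless := by
    constructor
    rintro p ⟨hne, -⟩
    exact hne rfl

/-- The undirected optical index `w(G)`: the minimum over all all-to-all routings `R`
of the chromatic number of the conflict graph `Q(R)`. -/
noncomputable def opticalIndex {V : Type*} (G : SimpleGraph V) : ℕ :=
  sInf {n | ∃ R : Routing G, R.conflictGraph.Colorable n}

/-- The load of an edge `e` under a routing: the number of paths of the routing
containing `e`. -/
noncomputable def Routing.load {V : Type*} {G : SimpleGraph V} (R : Routing G)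
    (e : Sym2 V) : ℕ :=
  Nat.card {p : {p : Sym2 V // ¬ p.IsDiag} //
    ∃ u v : V, (p : Sym2 V) = s(u, v) ∧ e ∈ (R.path u v).edges}

/-- The edge-forwarding index `π(G)`: the minimum over all all-to-all routings of the
maximum edge load. -/
noncomputable def forwardingIndex {V : Type*} (G : SimpleGraph V) : ℕ :=
  sInf {n | ∃ R : Routing G, ∀ e ∈ G.edgeSet, R.load e ≤ n}

/-- The complete `m`-ary tree of height `h`: vertices are words over `Fin m` of length
at most `h` (the root is the empty word), a vertex being adjacent to its parent. -/
def completeMAryTree (m h : ℕ) : SimpleGraph {l : List (Fin m) // l.length ≤ h} where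
  Adj x y := (∃ a : Fin m, x.val = a :: y.val) ∨ (∃ a : Fin m, y.val = a :: x.val)
  symm := ⟨fun x y hxy => Or.symm hxy⟩
  loopless := by
    constructor
    rintro x (⟨a, ha⟩ | ⟨a, ha⟩) <;> exact List.cons_ne_self a x.val ha.symm

/-- The tree `D_{m,h}`: two disjoint copies of the complete `m`-ary tree of height `h-1`
with an edge joining the two roots. -/
def doubleMAryTree (m h : ℕ) :
    SimpleGraph (Bool × {l : List (Fin m) // l.length ≤ h - 1}) where
  Adj x y := (x.1 = y.1 ∧ ((∃ a : Fin m, x.2.val = a :: y.2.val) ∨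
      (∃ a : Fin m, y.2.val = a :: x.2.val)))
    ∨ (x.1 ≠ y.1 ∧ x.2.val = [] ∧ y.2.val = [])
  symm := by
    constructor
    rintro x y (⟨hb, hxy⟩ | ⟨hb, h1, h2⟩)
    · exact Or.inl ⟨hb.symm, Or.symm hxy⟩
    · exact Or.inr ⟨hb.symm, h2, h1⟩
  loopless := by
    constructor
    rintro x (⟨-, (⟨a, ha⟩ | ⟨a, ha⟩)⟩ | ⟨hb, -⟩)
    · exact List.cons_ne_self a _ ha.symm
    · exact List.cons_ne_self a _ ha.symm
    · exact hb rfl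

/-!
Fix an optimal routing and a colouring of its conflict graph with `w(G)` colours. A path joining
two vertices in distinct components of `G − S` must enter and leave `S`, so it uses at least two
edges of the cut `[S, V(G)∖S]`. Paths of one colour are pairwise edge-disjoint, hence each colour
class contains at most `⌊|[S, V(G)∖S]|/2⌋` such paths, and there are `∑_{i<j} |H_i|·|H_j|` of them.
-/

namespace Finset

theorem mul_card_le_card_of_pairwiseDisjoint {ι α : Type*} [DecidableEq α] {s : Finset ι}
    {f : ι → Finset α} {F : Finset α} {k : ℕ} (hdisj : (s : Set ι).PairwiseDisjoint f)
    (hsub : ∀ i ∈ s, f i ⊆ F) (hk : ∀ i ∈ s, k ≤ (f i).card) : k * s.card ≤ F.card :=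
  calc k * s.card ≤ ∑ i ∈ s, (f i).card := by
        simpa [mul_comm] using s.card_nsmul_le_sum (fun i => (f i).card) k hk
    _ = (s.biUnion f).card := (card_biUnion hdisj).symm
    _ ≤ F.card := card_le_card (biUnion_subset.mpr hsub)

theorem card_le_two_mul_card_image_of_eq_or_swap {α β : Type*} [DecidableEq α] [DecidableEq β]
    (s : Finset (α × α)) {f : α × α → β} (hf : ∀ p q, f p = f q → q = p ∨ q = p.swap) :
    s.card ≤ 2 * (s.image f).card :=
  card_le_mul_card_image s 2 fun b hb => by
    obtain ⟨p, -, rfl⟩ := mem_image.mp hb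
    calc (s.filter (f · = f p)).card ≤ ({p, p.swap} : Finset _).card :=
          card_le_card fun q hq => by
            rcases hf p q (mem_filter.mp hq).2.symm with rfl | rfl <;> simp
      _ ≤ 2 := card_le_two

end Finset

namespace SimpleGraph

variable {V : Type*} {G : SimpleGraph V}

theorem Coloring.card_le_card_mul_of_isIndepSet {α : Type*} [Fintype α] [DecidableEq α]
    (C : G.Coloring α) (s : Finset V) {m : ℕ}
    (h : ∀ t ⊆ s, G.IsIndepSet (t : Set V) → t.card ≤ m) : s.card ≤ Fintype.card α * m := by
  have hclass : ∀ c ∈ s.image C, (s.filter (C · = c)).card ≤ m := fun c _ =>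
    h _ (Finset.filter_subset _ _) fun v hv w hw _ =>
      C.not_adj_of_mem_colorClass (Finset.mem_filter.mp hv).2 (Finset.mem_filter.mp hw).2
  calc s.card ≤ m * (s.image C).card := Finset.card_le_mul_card_image s m hclass
    _ ≤ m * Fintype.card α := Nat.mul_le_mul_left _ (Finset.card_le_univ _)
    _ = Fintype.card α * m := mul_comm _ _

theorem Connected.nonempty_routing (hG : G.Connected) : Nonempty (Routing G) := by
  let : LinearOrder V := IsWellOrder.linearOrder WellOrderingRel
  let P : ∀ u v : V, G.Path u v := fun u v => (hG.preconnected u v).some.toPath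
  refine ⟨⟨fun u v => if u ≤ v then P u v else (P v u : G.Walk v u).reverse, fun u v => ?_,
    fun u v => ?_⟩⟩
  · split
    · exact (P u v).prop
    · exact (P v u).prop.reverse
  · rcases lt_trichotomy u v with h | rfl | h
    · rw [if_pos h.le, if_neg (not_le.mpr h)]
    · rw [if_pos le_rfl, Walk.eq_nil_iff_nil.mpr (Walk.isPath_iff_nil.mp (P u u).prop),
        Walk.reverse_nil]
    · rw [if_pos h.le, if_neg (not_le.mpr h), Walk.reverse_reverse]

def separatedPairs (G : SimpleGraph V) (S : Set V) : Set (↥Sᶜ × ↥Sᶜ) :=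
  {p | (G.induce Sᶜ).connectedComponentMk p.1 ≠ (G.induce Sᶜ).connectedComponentMk p.2}

variable [DecidableEq V] {S : Set V} {F : Finset (Sym2 V)}

theorem Walk.one_le_countP_of_mem_of_notMem
    (hF : ∀ u v, G.Adj u v → u ∈ S → v ∉ S → s(u, v) ∈ F) :
    ∀ {x y : V} (w : G.Walk x y), x ∈ S → y ∉ S → 1 ≤ w.edges.countP (· ∈ F)
  | _, _, .nil, hx, hy => absurd hx hy
  | x, _, .cons (v := v) h w, hx, hy => by
    rw [Walk.edges_cons, List.countP_cons]
    by_cases hv : v ∈ S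
    · exact (one_le_countP_of_mem_of_notMem hF w hv hy).trans (Nat.le_add_right _ _)
    · simp [hF x v h hx hv]

theorem Walk.two_le_countP_of_connectedComponentMk_ne
    (hF : ∀ u v, G.Adj u v → u ∈ S → v ∉ S → s(u, v) ∈ F) :
    ∀ {x y : V} (w : G.Walk x y) (hx : x ∈ Sᶜ) (hy : y ∈ Sᶜ),
      (G.induce Sᶜ).connectedComponentMk ⟨x, hx⟩ ≠ (G.induce Sᶜ).connectedComponentMk ⟨y, hy⟩ →
      2 ≤ w.edges.countP (· ∈ F)
  | _, _, .nil, _, _, hne => absurd rfl hne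
  | x, _, .cons (v := v) h w, hx, hy, hne => by
    rw [Walk.edges_cons, List.countP_cons]
    by_cases hv : v ∈ S
    · have hxv : s(x, v) ∈ F := Sym2.eq_swap ▸ hF v x h.symm hv hx
      have := one_le_countP_of_mem_of_notMem hF w hv hy
      simp only [hxv, decide_true, if_pos]
      omega
    · have hxv : (G.induce Sᶜ).connectedComponentMk ⟨x, hx⟩ =
          (G.induce Sᶜ).connectedComponentMk ⟨v, hv⟩ :=
        ConnectedComponent.connectedComponentMk_eq_of_adj (show (G.induce Sᶜ).Adj _ _ from h)
      exact (two_le_countP_of_connectedComponentMk_ne hF w hv hy (hxv ▸ hne)).trans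
        (Nat.le_add_right _ _)

theorem Walk.IsPath.card_toFinset_edges_inter {x y : V} {w : G.Walk x y} (hw : w.IsPath)
    (F : Finset (Sym2 V)) : (w.edges.toFinset ∩ F).card = w.edges.countP (· ∈ F) := by
  have : w.edges.toFinset ∩ F = (w.edges.filter (· ∈ F)).toFinset := by ext; simp
  rw [this, List.toFinset_card_of_nodup (hw.edges_nodup.filter _), List.countP_eq_length_filter]

end SimpleGraph

namespace Routing

variable {V : Type*} {G : SimpleGraph V}

theorem exists_colorable_opticalIndex [Finite V] (hG : G.Connected) :
    ∃ R : Routing G, R.conflictGraph.Colorable (opticalIndex G) := by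
  have : Fintype {p : Sym2 V // ¬ p.IsDiag} := Fintype.ofFinite _
  obtain ⟨R⟩ := hG.nonempty_routing
  exact Nat.sInf_mem (s := {n | ∃ R : Routing G, R.conflictGraph.Colorable n})
    ⟨_, R, colorable_of_fintype _⟩

variable [DecidableEq V] (R : Routing G)

def edgesOn : Sym2 V → Finset (Sym2 V) :=
  Sym2.lift ⟨fun u v => (R.path u v).edges.toFinset, fun u v => by
    dsimp only
    rw [R.symm u v, Walk.edges_reverse, List.toFinset_reverse]⟩

@[simp]
theorem edgesOn_mk (u v : V) : R.edgesOn s(u, v) = (R.path u v).edges.toFinset := rfl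

theorem conflictGraph_adj_iff {p q : {p : Sym2 V // ¬ p.IsDiag}} :
    R.conflictGraph.Adj p q ↔ p ≠ q ∧ ¬ Disjoint (R.edgesOn p) (R.edgesOn q) := by
  constructor
  · rintro ⟨hne, u, v, u', v', e, hp, hq, he, he'⟩
    refine ⟨hne, Finset.not_disjoint_iff.mpr ⟨e, ?_, ?_⟩⟩
    · simpa [hp] using he
    · simpa [hq] using he'
  · obtain ⟨⟨⟨u, v⟩⟩, hp⟩ := p
    obtain ⟨⟨⟨u', v'⟩⟩, hq⟩ := q
    rintro ⟨hne, hnd⟩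
    obtain ⟨e, he, he'⟩ := Finset.not_disjoint_iff.mp hnd
    exact ⟨hne, u, v, u', v', e, rfl, rfl, by simpa using he, by simpa using he'⟩

theorem mul_card_le_of_isIndepSet {t : Finset {p : Sym2 V // ¬ p.IsDiag}}
    (ht : R.conflictGraph.IsIndepSet (t : Set _)) (F : Finset (Sym2 V)) {k : ℕ}
    (hk : ∀ p ∈ t, k ≤ (R.edgesOn p ∩ F).card) : k * t.card ≤ F.card :=
  Finset.mul_card_le_card_of_pairwiseDisjoint
    (fun _ hp _ hq hne =>
      (not_not.mp fun h => ht hp hq hne (R.conflictGraph_adj_iff.mpr ⟨hne, h⟩)).mono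
        Finset.inter_subset_left Finset.inter_subset_left)
    (fun _ _ => Finset.inter_subset_right) hk

variable {S : Set V} {F : Finset (Sym2 V)}

theorem two_le_card_edgesOn_inter_of_mem_separatedPairs
    (hF : ∀ u v, G.Adj u v → u ∈ S → v ∉ S → s(u, v) ∈ F) {q : ↥Sᶜ × ↥Sᶜ}
    (hq : q ∈ G.separatedPairs S) : 2 ≤ (R.edgesOn s(q.1.val, q.2.val) ∩ F).card := by
  rw [R.edgesOn_mk, (R.isPath _ _).card_toFinset_edges_inter]
  exact Walk.two_le_countP_of_connectedComponentMk_ne hF _ q.1.prop q.2.prop hq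

theorem card_separatedPairs_le [Finite V] {n : ℕ} (hR : R.conflictGraph.Colorable n)
    (hF : ∀ u v, G.Adj u v → u ∈ S → v ∉ S → s(u, v) ∈ F) :
    Nat.card (G.separatedPairs S) ≤ 2 * (n * (F.card / 2)) := by
  classical
  have := Fintype.ofFinite V
  obtain ⟨C⟩ := hR
  set Y := (G.separatedPairs S).toFinset.image fun q => s(q.1.val, q.2.val)
  have hY : ∀ p ∈ Y, ¬ p.IsDiag := by
    simp only [Y, Finset.mem_image, Set.mem_toFinset]
    rintro _ ⟨q, hq, rfl⟩ hdiag
    exact hq (congrArg _ (Subtype.ext (Sym2.mk_isDiag_iff.mp hdiag)))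
  have hindep : ∀ t : Finset _, t ⊆ Y.subtype (¬ ·.IsDiag) →
      R.conflictGraph.IsIndepSet (t : Set _) → t.card ≤ F.card / 2 := fun t ht hind =>
    (Nat.le_div_iff_mul_le two_pos).mpr <| mul_comm t.card 2 ▸
      R.mul_card_le_of_isIndepSet hind F fun p hp => by
        obtain ⟨q, hq, hqp⟩ := Finset.mem_image.mp (Finset.mem_subtype.mp (ht hp))
        rw [← hqp]
        exact R.two_le_card_edgesOn_inter_of_mem_separatedPairs hF (Set.mem_toFinset.mp hq)
  calc Nat.card (G.separatedPairs S) = (G.separatedPairs S).toFinset.card :=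
        Nat.card_eq_card_toFinset _
    _ ≤ 2 * Y.card := Finset.card_le_two_mul_card_image_of_eq_or_swap _ fun p q hpq => by
        rcases Sym2.eq_iff.mp hpq with ⟨h1, h2⟩ | ⟨h1, h2⟩
        · exact .inl (Prod.ext (Subtype.ext h1.symm) (Subtype.ext h2.symm))
        · exact .inr (Prod.ext (Subtype.ext h2.symm) (Subtype.ext h1.symm))
    _ = 2 * (Y.subtype (¬ ·.IsDiag)).card := by
        rw [Finset.card_subtype, Finset.filter_true_of_mem hY]
    _ ≤ 2 * (n * (F.card / 2)) := by
        gcongr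
        simpa using C.card_le_card_mul_of_isIndepSet _ hindep

end Routing

theorem vertex_cut_bound_general {V : Type*} [Fintype V] (G : SimpleGraph V) (hG : G.Connected)
    (S : Set V) :
    ((Nat.card {p : ↥Sᶜ × ↥Sᶜ |
          (G.induce Sᶜ).connectedComponentMk p.1 ≠ (G.induce Sᶜ).connectedComponentMk p.2} : ℝ)
        / 2) /
      ((Nat.card {e : Sym2 V | e ∈ G.edgeSet ∧ ∃ u v : V, e = s(u, v) ∧ u ∈ S ∧ v ∉ S} / 2
          : ℕ) : ℝ)
      ≤ (opticalIndex G : ℝ) := by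
  classical
  set F := {e : Sym2 V | e ∈ G.edgeSet ∧ ∃ u v : V, e = s(u, v) ∧ u ∈ S ∧ v ∉ S}.toFinset
  have hF : ∀ u v, G.Adj u v → u ∈ S → v ∉ S → s(u, v) ∈ F := fun u v h hu hv =>
    Set.mem_toFinset.mpr ⟨h, u, v, rfl, hu, hv⟩
  obtain ⟨R, hR⟩ := Routing.exists_colorable_opticalIndex hG
  have hcount := R.card_separatedPairs_le hR hF
  rw [Nat.card_eq_card_toFinset {e : Sym2 V | _}]
  refine div_le_of_le_mul₀ (by positivity) (by positivity) ?_
  rw [div_le_iff₀ two_pos]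
  exact_mod_cast (hcount.trans_eq (by ring) : _ ≤ opticalIndex G * (F.card / 2) * 2)

/-- Vertex-cut Bound: for every connected simple graph `G` and every vertex
cut `S` (a set whose removal leaves more than one connected component),
`w(G) ≥ (∑_{i<j} |H_i|·|H_j|) / ⌊|[S, V(G)\\S]|/2⌋`, where the `H_i` are the connected
components of `G − S`.  The sum `∑_{i<j} |H_i|·|H_j|` is expressed as half the number of
ordered pairs of vertices of `G − S` lying in distinct components. -/
theorem vertex_cut_bound {V : Type*} [Fintype V] (G : SimpleGraph V) (hG : G.Connected)
    (S : Set V)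
    (hcut : 1 < Nat.card (G.induce Sᶜ).ConnectedComponent) :
    ((Nat.card {p : ↥Sᶜ × ↥Sᶜ |
          (G.induce Sᶜ).connectedComponentMk p.1 ≠ (G.induce Sᶜ).connectedComponentMk p.2} : ℝ)
        / 2) /
      ((Nat.card {e : Sym2 V | e ∈ G.edgeSet ∧ ∃ u v : V, e = s(u, v) ∧ u ∈ S ∧ v ∉ S} / 2
          : ℕ) : ℝ)
      ≤ (opticalIndex G : ℝ) :=
  vertex_cut_bound_general G hG S
end

section
/- The undirected optical index of the complete binary tree of height 1 (the star with 3 vertices, i.e. the path with 3 vertices) equals 2, and the undirected optical index of the complete binary tree of height 2 equals 12. -/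
open SimpleGraph

/-!
The edge joining the root of `T_{2,h}` to one of its children is a bridge: it separates that
child's subtree (1 vertex for `h = 1`, 3 vertices for `h = 2`) from the rest of the tree (2,
resp. 4, vertices). Every path between the two sides uses it, so these `1 * 2 = 2`, resp.
`3 * 4 = 12`, paths pairwise conflict and need distinct colours in any routing. Conversely, the
conflict graph of the routing of the tree admits a colouring with that many colours, which is
checked by computation.
-/

theorem SimpleGraph.Walk.mem_edges_of_boundary_eq {V : Type*} {G : SimpleGraph V} {u v : V}
    (p : G.Walk u v) {S : Set V} {e : Sym2 V}
    (hS : ∀ x y, G.Adj x y → x ∈ S → y ∉ S → s(x, y) = e) (hu : u ∈ S) (hv : v ∉ S) :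
    e ∈ p.edges := by
  obtain ⟨d, hd, hfst, hsnd⟩ := p.exists_boundary_dart S hu hv
  rw [← hS _ _ d.adj hfst hsnd]
  exact List.mem_map_of_mem hd

namespace Routing

variable {V : Type*} {G : SimpleGraph V}

def ofWalks [LinearOrder V] (w : ∀ u v : V, G.Walk u v) : Routing G where
  path u v := if u ≤ v then (w u v).bypass else (w v u).bypass.reverse
  isPath u v := by
    split
    · exact (w u v).bypass_isPath
    · exact (w v u).bypass_isPath.reverse
  symm u v := by
    rcases lt_trichotomy u v with huv | rfl | huv
    · simp [huv.le, huv.not_ge]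
    · have hnil := Walk.eq_nil_iff_nil.mpr (Walk.isPath_iff_nil.mp (w u u).bypass_isPath)
      simp [hnil]
    · simp [huv.le, huv.not_ge]

theorem opticalIndex_eq_of_colorable {k : ℕ} (R : Routing G) (hR : R.conflictGraph.Colorable k)
    (hle : ∀ (R : Routing G) (n : ℕ), R.conflictGraph.Colorable n → k ≤ n) :
    opticalIndex G = k :=
  le_antisymm (Nat.sInf_le ⟨R, hR⟩) (le_csInf ⟨k, R, hR⟩ fun _ ⟨R, hn⟩ => hle R _ hn)

theorem colorable_of_edges_disjoint {k : ℕ} (R : Routing G) (c : Sym2 V → Fin k)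
    (hc : ∀ u v u' v', s(u, v) ≠ s(u', v') → c s(u, v) = c s(u', v') →
      ∀ e ∈ (R.path u v).edges, e ∉ (R.path u' v').edges) :
    R.conflictGraph.Colorable k :=
  ⟨.mk (fun p => c p.val) fun {p q} ⟨hpq, u, v, u', v', e, hp, hq, he, he'⟩ hcpq => by
    rw [hp, hq] at hcpq
    exact hc u v u' v' (by rw [← hp, ← hq]; exact fun h => hpq (Subtype.ext h)) hcpq e he he'⟩

theorem card_mul_card_compl_le [Fintype V] [DecidableEq V] (R : Routing G) {S : Finset V}
    {e : Sym2 V} (hS : ∀ x y, G.Adj x y → x ∈ S → y ∉ S → s(x, y) = e) {n : ℕ}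
    (hn : R.conflictGraph.Colorable n) : S.card * Sᶜ.card ≤ n := by
  obtain ⟨C⟩ := hn
  let f : S × (Sᶜ : Finset V) → {p : Sym2 V // ¬ p.IsDiag} := fun xy =>
    ⟨s(xy.1, xy.2), fun h => (Finset.mem_compl.mp xy.2.2) (Sym2.mk_isDiag_iff.mp h ▸ xy.1.2)⟩
  have hf : Function.Injective f := by
    rintro ⟨⟨x, hx⟩, ⟨y, hy⟩⟩ ⟨⟨x', hx'⟩, ⟨y', hy'⟩⟩ hxy
    rw [Finset.mem_compl] at hy hy'
    rcases Sym2.eq_iff.mp (congrArg Subtype.val hxy) with ⟨rfl, rfl⟩ | ⟨rfl, rfl⟩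
    · rfl
    · exact absurd hx' hy
  have hCf : Function.Injective (C ∘ f) := by
    rintro ⟨⟨x, hx⟩, ⟨y, hy⟩⟩ ⟨⟨x', hx'⟩, ⟨y', hy'⟩⟩ hC
    by_contra hne
    rw [Finset.mem_compl] at hy hy'
    have hS' : ∀ x y, G.Adj x y → x ∈ (S : Set V) → y ∉ (S : Set V) → s(x, y) = e := hS
    exact C.valid ⟨hf.ne hne, x, y, x', y', e, rfl, rfl,
      (R.path x y).mem_edges_of_boundary_eq hS' hx hy,
      (R.path x' y').mem_edges_of_boundary_eq hS' hx' hy'⟩ hC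
  simpa [Finset.card_compl] using Fintype.card_le_of_injective _ hCf

end Routing

namespace completeMAryTree

abbrev Vertex (m h : ℕ) := {l : List (Fin m) // l.length ≤ h}

def wordsOfLengthLE (m : ℕ) : ℕ → Finset (List (Fin m))
  | 0 => {[]}
  | h + 1 => insert [] ((wordsOfLengthLE m h ×ˢ Finset.univ).image fun p => p.2 :: p.1)

theorem mem_wordsOfLengthLE {m h : ℕ} {l : List (Fin m)} :
    l ∈ wordsOfLengthLE m h ↔ l.length ≤ h := by
  induction h generalizing l with
  | zero => cases l <;> simp [wordsOfLengthLE]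
  | succ h ih => cases l <;> simp [wordsOfLengthLE, ih]

instance {m h : ℕ} : Fintype (Vertex m h) :=
  Fintype.subtype (wordsOfLengthLE m h) fun _ => mem_wordsOfLengthLE

variable {m h : ℕ}

def walkToRoot : (l : List (Fin m)) → (hl : l.length ≤ h) →
    (completeMAryTree m h).Walk ⟨l, hl⟩ ⟨[], h.zero_le⟩
  | [], _ => .nil
  | a :: t, hl => .cons (Or.inl ⟨a, rfl⟩) (walkToRoot t (Nat.le_of_succ_le hl))

def routing (m h : ℕ) : Routing (completeMAryTree m h) :=
  .ofWalks fun u v => (walkToRoot u.1 u.2).append (walkToRoot v.1 v.2).reverse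

/-- The vertices below the child `[a]` of the root (words are read from the leaf up). -/
def subtree (h : ℕ) (a : Fin m) : Finset (Vertex m h) :=
  Finset.univ.filter fun x => x.val.getLast? = some a

theorem boundary_edge_subtree {a : Fin m} (ha : 1 ≤ h) {x y : Vertex m h}
    (hxy : (completeMAryTree m h).Adj x y) (hx : x ∈ subtree h a) (hy : y ∉ subtree h a) :
    s(x, y) = s(⟨[a], ha⟩, ⟨[], h.zero_le⟩) := by
  obtain ⟨x, hxl⟩ := x
  obtain ⟨y, hyl⟩ := y
  simp only [subtree, Finset.mem_filter, Finset.mem_univ, true_and] at hx hy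
  rcases hxy with ⟨b, rfl⟩ | ⟨b, rfl⟩
  · cases y with
    | nil => simp_all
    | cons c t => simp_all [List.getLast?_cons_cons]
  · cases x with
    | nil => simp at hx
    | cons c t => simp_all [List.getLast?_cons_cons]

theorem card_subtree_mul_card_compl_le (a : Fin m) (ha : 1 ≤ h)
    (R : Routing (completeMAryTree m h)) {n : ℕ} (hn : R.conflictGraph.Colorable n) :
    (subtree h a).card * (subtree h a)ᶜ.card ≤ n :=
  R.card_mul_card_compl_le (fun _ _ hxy hx hy => boundary_edge_subtree ha hxy hx hy) hn

/-- Heap numbering: the root is `0` and the children of `i` are `m * i + 1, …, m * i + m`. -/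
def heapIndex (x : Vertex m h) : ℕ := x.val.foldr (fun a i => m * i + a + 1) 0

def heapColoring {k : ℕ} (c : ℕ → ℕ → Fin k) : Sym2 (Vertex m h) → Fin k :=
  Sym2.lift ⟨fun u v => c (min (heapIndex u) (heapIndex v)) (max (heapIndex u) (heapIndex v)),
    fun u v => by dsimp only; rw [min_comm, max_comm]⟩

theorem colorable_two_one : (routing 2 1).conflictGraph.Colorable 2 :=
  (routing 2 1).colorable_of_edges_disjoint (heapColoring fun i _ => if i = 0 then 0 else 1)
    (by decide)

/-- Colour of the path between the vertices with heap indices `i < j` in `T_{2,2}`. -/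
def colorTableTwoTwo : ℕ → ℕ → Fin 12
  | 0, 1 => 11 | 0, 2 => 11 | 0, 3 => 9 | 0, 4 => 10 | 0, 5 => 9 | 0, 6 => 10
  | 1, 2 => 8 | 1, 3 => 2 | 1, 4 => 0 | 1, 5 => 4 | 1, 6 => 5
  | 2, 3 => 6 | 2, 4 => 7 | 2, 5 => 1 | 2, 6 => 0
  | 3, 4 => 4 | 3, 5 => 0 | 3, 6 => 1
  | 4, 5 => 2 | 4, 6 => 3
  | 5, 6 => 6
  | _, _ => 0

theorem colorable_two_two : (routing 2 2).conflictGraph.Colorable 12 :=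
  (routing 2 2).colorable_of_edges_disjoint (heapColoring colorTableTwoTwo) (by decide)

end completeMAryTree

/-- the undirected optical index of the complete binary tree of height 1
equals 2, and that of the complete binary tree of height 2 equals 12. -/
theorem opticalIndex_binaryTree_height_one_two :
    opticalIndex (completeMAryTree 2 1) = 2 ∧ opticalIndex (completeMAryTree 2 2) = 12 := by
  constructor
  · refine (completeMAryTree.routing 2 1).opticalIndex_eq_of_colorable
      completeMAryTree.colorable_two_one fun R n hn => ?_
    have hcard : (completeMAryTree.subtree 1 (0 : Fin 2)).card *
        (completeMAryTree.subtree 1 (0 : Fin 2))ᶜ.card = 2 := by decide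
    exact hcard ▸ completeMAryTree.card_subtree_mul_card_compl_le 0 le_rfl R hn
  · refine (completeMAryTree.routing 2 2).opticalIndex_eq_of_colorable
      completeMAryTree.colorable_two_two fun R n hn => ?_
    have hcard : (completeMAryTree.subtree 2 (0 : Fin 2)).card *
        (completeMAryTree.subtree 2 (0 : Fin 2))ᶜ.card = 12 := by decide
    exact hcard ▸ completeMAryTree.card_subtree_mul_card_compl_le 0 (by norm_num) R hn
end

section
/- For every odd integer m ≥ 3 and every positive integer h, the undirected optical index of the complete m-ary tree of height h equals m·(1 + m + m^2 + … + m^{h−1})^2. -/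
open SimpleGraph

/-!
In a tree the routing is forced: the path from `u` to `v` uses the edge from a vertex `w` to its
parent exactly when the subtree of `w` separates `u` from `v`.

Lower bound. Let `S` be the size of a branch below the root, so that there are `N = 1 + mS`
vertices. Each of the `m` top edges carries `S (N - S)` paths. A colour class is edge-disjoint,
so it uses each top edge at most once; a path avoiding the root uses an even number (0 or 2) of
top edges, so, `m` being odd, a class using all `m` top edges contains one of the `mS` paths
starting at the root. Hence `mS (N - S) ≤ (m - 1) n + mS`, that is `n ≥ mS²`.

Upper bound. Write a non-root vertex as `(i, s)`, with `i` its top branch and `s` the word below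
it, order these lexicographically, and colour a pair `{a, b}` by
`(i_a + i_b mod m, s_(min a b), s_(max a b))`; a pair `{root, y}` takes the colour of the unused
diagonal pair `{y, y}`. Two paths sharing an edge inside branch `i` both have an endpoint in
branch `i`, and among such pairs the colour determines the pair.
-/

open Finset

section Routing

variable {V : Type*} {G : SimpleGraph V}

theorem Routing.nonempty_of_connected (hG : G.Connected) : Nonempty (Routing G) := by
  classical
  let _ : LinearOrder V := IsWellOrder.linearOrder WellOrderingRel
  let P : ∀ u v : V, G.Path u v := fun u v => (hG.preconnected u v).some.toPath
  refine ⟨⟨fun u v => if u ≤ v then P u v else (P v u : G.Walk v u).reverse,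
    fun u v => ?_, fun u v => ?_⟩⟩
  · split
    · exact (P u v).2
    · exact (P v u).2.reverse
  · rcases lt_trichotomy u v with huv | rfl | huv
    · simp [huv.le, huv.not_ge]
    · simp [Path.loop_eq (P u u)]
    · simp [huv.le, huv.not_ge]

theorem Routing.eq_of_color_eq_of_mem_edges {α : Type*} {R : Routing G}
    (C : R.conflictGraph.Coloring α) {P Q : {P : Sym2 V // ¬ P.IsDiag}} {u v u' v' : V}
    {e : Sym2 V} (hP : P.1 = s(u, v)) (hQ : Q.1 = s(u', v')) (he : e ∈ (R.path u v).edges)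
    (he' : e ∈ (R.path u' v').edges) (hC : C P = C Q) : P = Q := by
  by_contra hne
  exact C.valid ⟨hne, u, v, u', v', e, hP, hQ, he, he'⟩ hC

def Sym2.Separates {α : Type*} (A : Set α) : Sym2 α → Prop :=
  Sym2.lift ⟨fun x y => Xor (x ∈ A) (y ∈ A), fun _ _ => xor_comm _ _⟩

@[simp]
theorem Sym2.separates_mk {α : Type*} (A : Set α) (x y : α) :
    s(x, y).Separates A ↔ Xor (x ∈ A) (y ∈ A) := Iff.rfl

theorem SimpleGraph.Walk.IsTrail.mem_edges_iff_separates {A : Set V} {a b : V} (ha : a ∈ A)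
    (hb : b ∉ A) (hboundary : ∀ x y, G.Adj x y → x ∈ A → y ∉ A → x = a ∧ y = b) :
    ∀ {u v : V} {p : G.Walk u v}, p.IsTrail → (s(a, b) ∈ p.edges ↔ s(u, v).Separates A)
  | _, _, .nil, _ => by simp
  | u, v, .cons (v := x) hux p, hp => by
    rw [Walk.isTrail_cons] at hp
    have ih := hp.1.mem_edges_iff_separates ha hb hboundary
    simp only [Walk.edges_cons, List.mem_cons, Sym2.separates_mk, xor_iff_not_iff] at ih ⊢
    by_cases hcross : (u ∈ A ↔ x ∈ A)
    · have hne : s(a, b) ≠ s(u, x) := by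
        intro h
        rcases Sym2.eq_iff.1 h with ⟨rfl, rfl⟩ | ⟨rfl, rfl⟩ <;> tauto
      tauto
    · have heq : s(a, b) = s(u, x) := by
        by_cases hu : u ∈ A
        · obtain ⟨rfl, rfl⟩ := hboundary u x hux hu (by tauto); rfl
        · obtain ⟨rfl, rfl⟩ := hboundary x u hux.symm (by tauto) hu; exact Sym2.eq_swap
      rw [← heq] at hp
      tauto

end Routing

theorem card_separates_eq {α : Type*} [Fintype α] [DecidableEq α] (A : Set α)
    [DecidablePred (· ∈ A)]
    [DecidablePred fun P : {P : Sym2 α // ¬ P.IsDiag} => P.1.Separates A] :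
    #{P : {P : Sym2 α // ¬ P.IsDiag} | P.1.Separates A} =
      Fintype.card A * Fintype.card ↥Aᶜ := by
  let f : A × ↥Aᶜ → {P : {P : Sym2 α // ¬ P.IsDiag} // P.1.Separates A} := fun xy =>
    ⟨⟨s(xy.1, xy.2), fun h => xy.2.2 (Sym2.mk_isDiag_iff.1 h ▸ xy.1.2)⟩,
      Or.inl ⟨xy.1.2, xy.2.2⟩⟩
  have hf : f.Bijective := by
    refine ⟨fun ⟨⟨x, hx⟩, ⟨y, hy⟩⟩ ⟨⟨x', hx'⟩, ⟨y', hy'⟩⟩ h => ?_,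
      fun ⟨⟨P, hP⟩, hsep⟩ => ?_⟩
    · have h' : s(x, y) = s(x', y') := congrArg (fun P => P.1.1) h
      rcases Sym2.eq_iff.1 h' with ⟨rfl, rfl⟩ | ⟨rfl, rfl⟩
      · rfl
      · exact absurd hx hy'
    · induction P using Sym2.ind with
      | h x y =>
        rcases (Sym2.separates_mk A x y).1 hsep with ⟨hx, hy⟩ | ⟨hy, hx⟩
        · exact ⟨⟨⟨x, hx⟩, ⟨y, hy⟩⟩, rfl⟩
        · exact ⟨⟨⟨y, hy⟩, ⟨x, hx⟩⟩, Subtype.ext (Subtype.ext Sym2.eq_swap)⟩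
  rw [← Fintype.card_subtype, ← Fintype.card_prod, Fintype.card_of_bijective hf]

theorem sum_le_of_sum_fiber_le {ι κ : Type*} [Fintype ι] [Fintype κ] [DecidableEq κ]
    (C : ι → κ) (f : ι → ℕ) (A : Finset ι) (n : ℕ)
    (hle : ∀ c, ∑ i with C i = c, f i ≤ n)
    (hlt : ∀ c ∉ A.image C, ∑ i with C i = c, f i < n) :
    ∑ i, f i ≤ (n - 1) * Fintype.card κ + #A :=
  calc ∑ i, f i = ∑ c, ∑ i with C i = c, f i := (sum_fiberwise _ _ _).symm
    _ ≤ ∑ c, ((n - 1) + if c ∈ A.image C then 1 else 0) := by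
      refine sum_le_sum fun c _ => ?_
      split_ifs with hc
      · exact (hle c).trans (by omega)
      · exact Nat.le_sub_one_of_lt (hlt c hc) |>.trans (by omega)
    _ = (n - 1) * Fintype.card κ + #(A.image C) := by
      rw [sum_add_distrib, sum_const, sum_boole, Nat.cast_id, card_univ, smul_eq_mul, mul_comm,
        filter_mem_eq_inter, univ_inter]
    _ ≤ (n - 1) * Fintype.card κ + #A := by grw [card_image_le]

section LexColor

variable {α β : Type*} [AddCancelCommMonoid α] [LinearOrder α] [LinearOrder β]

def lexColor : Sym2 (α ×ₗ β) → α × β × β :=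
  Sym2.lift ⟨fun a b => ((ofLex a).1 + (ofLex b).1, (ofLex (min a b)).2, (ofLex (max a b)).2),
    fun a b => by dsimp only; rw [add_comm, min_comm, max_comm]⟩

theorem eq_of_lexColor_eq {a b a' b' : α ×ₗ β} (h : lexColor s(a, b) = lexColor s(a', b'))
    (ha : (ofLex a).1 = (ofLex a').1) : s(a, b) = s(a', b') := by
  simp only [lexColor, Sym2.lift_mk, Prod.mk.injEq] at h
  obtain ⟨hsum, hmin, hmax⟩ := h
  have hb : (ofLex b).1 = (ofLex b').1 := add_left_cancel (ha ▸ hsum)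
  have hfst : Monotone fun t : α ×ₗ β => (ofLex t).1 := Prod.Lex.monotone_fst
  have hmin' : min a b = min a' b' := ofLex_inj.1 <| Prod.ext
    ((hfst.map_min.trans (congrArg₂ min ha hb)).trans hfst.map_min.symm) hmin
  have hmax' : max a b = max a' b' := ofLex_inj.1 <| Prod.ext
    ((hfst.map_max.trans (congrArg₂ max ha hb)).trans hfst.map_max.symm) hmax
  have hsort (x y : α ×ₗ β) : s(min x y, max x y) = s(x, y) := by
    rcases le_total x y with hxy | hxy <;> simp [hxy, Sym2.eq_swap]
  rw [← hsort a b, ← hsort a' b', hmin', hmax']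

end LexColor

namespace MAryTree

abbrev Vertex (m h : ℕ) := {l : List (Fin m) // l.length ≤ h}

instance (m h : ℕ) : Finite (Vertex m h) := (List.finite_length_le _ _).to_subtype

noncomputable instance (m h : ℕ) : Fintype (Vertex m h) := Fintype.ofFinite _

variable {m h k : ℕ}

def root : Vertex m h := ⟨[], Nat.zero_le _⟩

def up (x : Vertex m h) : Vertex m h := ⟨x.val.tail, by grind [List.length_tail]⟩

def subtree (w : Vertex m h) : Set (Vertex m h) := {x | w.val <:+ x.val}

theorem reachable_root (x : Vertex m h) : (completeMAryTree m h).Reachable x root := by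
  obtain ⟨l, hl⟩ := x
  induction l with
  | nil => rfl
  | cons a t ih =>
    exact (Adj.reachable (Or.inl ⟨a, rfl⟩)).trans (ih (le_of_add_le_left hl))

theorem connected : (completeMAryTree m h).Connected :=
  (connected_iff_exists_forall_reachable _).2 ⟨root, fun x => (reachable_root x).symm⟩

theorem exists_eq_up_of_mem_edgeSet {e : Sym2 (Vertex m h)}
    (he : e ∈ (completeMAryTree m h).edgeSet) : ∃ w, w ≠ root ∧ e = s(w, up w) := by
  induction e using Sym2.ind with
  | h x y =>
    rcases he with ⟨a, hx⟩ | ⟨a, hy⟩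
    · change x.val = a :: y.val at hx
      refine ⟨x, fun h => by simp [h, root] at hx, ?_⟩
      rw [show up x = y from Subtype.ext (by simp [up, hx])]
    · change y.val = a :: x.val at hy
      refine ⟨y, fun h => by simp [h, root] at hy, ?_⟩
      rw [show up y = x from Subtype.ext (by simp [up, hy]), Sym2.eq_swap]

theorem up_not_mem_subtree {w : Vertex m h} (hw : w ≠ root) : up w ∉ subtree w := fun hsuf => by
  have hlen := List.IsSuffix.length_le (hsuf : w.val <:+ (up w).val)
  have hne : w.val ≠ [] := fun h => hw (Subtype.ext h)
  simp only [up, List.length_tail] at hlen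
  grind [List.length_eq_zero_iff]

theorem eq_of_adj_of_mem_subtree {w x y : Vertex m h} (hxy : (completeMAryTree m h).Adj x y)
    (hx : x ∈ subtree w) (hy : y ∉ subtree w) : x = w ∧ y = up w := by
  rcases hxy with ⟨a, hxa⟩ | ⟨a, hya⟩
  · change w.val <:+ x.val at hx
    change ¬ w.val <:+ y.val at hy
    rw [hxa, List.suffix_cons_iff] at hx
    rcases hx with hx | hx
    · exact ⟨Subtype.ext (hxa.trans hx.symm), Subtype.ext (by simp [up, hx])⟩
    · exact absurd hx hy
  · exact absurd (hx.trans (hya ▸ List.suffix_cons a x.val)) hy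

theorem mem_edges_iff_separates {w u v : Vertex m h} (hw : w ≠ root)
    {p : (completeMAryTree m h).Walk u v} (hp : p.IsTrail) :
    s(w, up w) ∈ p.edges ↔ s(u, v).Separates (subtree w) :=
  hp.mem_edges_iff_separates (show w ∈ subtree w from List.suffix_rfl) (up_not_mem_subtree hw)
    fun _ _ hxy hx hy => eq_of_adj_of_mem_subtree hxy hx hy

theorem ne_root_of_mem_subtree {w x : Vertex m h} (hw : w ≠ root) (hx : x ∈ subtree w) :
    x ≠ root := by
  rintro rfl
  exact hw (Subtype.ext (List.suffix_nil.1 hx))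

def stem (x : Vertex m (k + 1)) : Vertex m k :=
  ⟨x.val.dropLast, by simpa using x.2⟩

def decompose : Vertex m (k + 1) ≃ Option (Fin m × Vertex m k) where
  toFun x := x.val.getLast?.map (·, stem x)
  invFun o := o.elim root fun p => ⟨p.2.val ++ [p.1], by simpa using p.2.2⟩
  left_inv x := by
    obtain ⟨l, hl⟩ := x
    rcases l.eq_nil_or_concat with rfl | ⟨l, a, rfl⟩
    · rfl
    · simp [stem]
  right_inv o := by
    rcases o with _ | ⟨a, l⟩
    · rfl
    · simp [stem]

theorem card_vertex_succ :
    Fintype.card (Vertex m (k + 1)) = 1 + m * Fintype.card (Vertex m k) := by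
  rw [Fintype.card_congr decompose, Fintype.card_option, Fintype.card_prod, Fintype.card_fin,
    add_comm]

theorem card_vertex : ∀ k, Fintype.card (Vertex m k) = ∑ i ∈ range (k + 1), m ^ i
  | 0 => by
    have : Unique (Vertex m 0) :=
      ⟨⟨root⟩, fun x => Subtype.ext (List.length_eq_zero_iff.1 (Nat.le_zero.1 x.2))⟩
    simp
  | k + 1 => by
    rw [card_vertex_succ, card_vertex k, sum_range_succ' _ (k + 1), mul_sum]
    simp [pow_succ', add_comm]

def top (i : Fin m) : Vertex m (k + 1) := ⟨[i], by simp⟩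

theorem mem_subtree_top {i : Fin m} {x : Vertex m (k + 1)} :
    x ∈ subtree (top i) ↔ x.val.getLast? = some i :=
  List.singleton_suffix_iff_getLast?_eq_some

def subtreeTopEquiv (i : Fin m) : subtree (top i : Vertex m (k + 1)) ≃ Vertex m k where
  toFun x := stem x
  invFun l := ⟨⟨l.val ++ [i], by simpa using l.2⟩, List.suffix_append _ _⟩
  left_inv := by
    rintro ⟨x, l, hl⟩
    ext1; ext1
    simp [stem, top, ← hl]
  right_inv l := by ext1; simp [stem]

theorem eq_root_iff_getLast?_eq_none {x : Vertex m k} : x = root ↔ x.val.getLast? = none := by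
  rw [List.getLast?_eq_none_iff, Subtype.ext_iff]
  rfl

theorem top_ne_root (i : Fin m) : (top i : Vertex m (k + 1)) ≠ root := by
  simp [top, root]

section LowerBound

open scoped Classical

noncomputable def crossings (P : Sym2 (Vertex m (k + 1))) : ℕ :=
  #{i : Fin m | P.Separates (subtree (top i))}

theorem even_crossings {P : Sym2 (Vertex m (k + 1))} (hP : ¬ P.Separates {root}) :
    Even (crossings P) := by
  induction P using Sym2.ind with
  | h x y =>
    simp only [crossings, Sym2.separates_mk, mem_subtree_top, Set.mem_singleton_iff,
      eq_root_iff_getLast?_eq_none] at hP ⊢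
    generalize x.val.getLast? = o at hP ⊢
    generalize y.val.getLast? = o' at hP ⊢
    rcases o with _ | a <;> rcases o' with _ | b
    · simp
    · simp at hP
    · simp at hP
    · by_cases hab : a = b
      · simp [hab]
      · have : ({i | Xor (some a = some i) (some b = some i)} : Finset (Fin m)) = {a, b} := by
          ext i
          simp only [Option.some.injEq, mem_filter, mem_univ, true_and, mem_insert, mem_singleton]
          grind
        rw [this, card_pair hab]
        exact even_two

theorem sum_crossings :
    ∑ P : {P : Sym2 (Vertex m (k + 1)) // ¬ P.IsDiag}, crossings P.1 =
      m * (Fintype.card (Vertex m k) *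
        (Fintype.card (Vertex m (k + 1)) - Fintype.card (Vertex m k))) := by
  simp only [crossings]
  calc _ = ∑ i : Fin m, #{P : {P : Sym2 (Vertex m (k + 1)) // ¬ P.IsDiag} |
          P.1.Separates (subtree (top i))} :=
        sum_card_bipartiteAbove_eq_sum_card_bipartiteBelow _
    _ = _ := by
      simp_rw [card_separates_eq, Fintype.card_compl_set, Fintype.card_congr (subtreeTopEquiv _)]
      simp

theorem sum_crossings_le {α : Type*} [DecidableEq α] {R : Routing (completeMAryTree m (k + 1))}
    (C : R.conflictGraph.Coloring α) (c : α) : ∑ P with C P = c, crossings P.1 ≤ m := by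
  simp only [crossings]
  calc _ = ∑ i : Fin m, #{P ∈ {P | C P = c} | P.1.Separates (subtree (top i))} :=
        sum_card_bipartiteAbove_eq_sum_card_bipartiteBelow _
    _ ≤ ∑ _i : Fin m, 1 := sum_le_sum fun i _ => card_le_one.2 fun P hP Q hQ => by
        simp only [mem_filter, mem_univ, true_and] at hP hQ
        obtain ⟨⟨u, v⟩, huv⟩ := Sym2.mk_surjective P.1
        obtain ⟨⟨u', v'⟩, huv'⟩ := Sym2.mk_surjective Q.1
        simp only [Function.uncurry_apply_pair] at huv huv'
        have hedge {x y} (hxy : s(x, y).Separates (subtree (top i))) :=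
          (mem_edges_iff_separates (top_ne_root i) (R.isPath x y).isTrail).2 hxy
        exact R.eq_of_color_eq_of_mem_edges C huv.symm huv'.symm (hedge (huv ▸ hP.2))
          (hedge (huv' ▸ hQ.2)) (hP.1.trans hQ.1.symm)
    _ = m := by simp

theorem mul_card_sq_le_of_colorable (hm : Odd m) (hm1 : 1 < m)
    (R : Routing (completeMAryTree m (k + 1))) {n : ℕ} (hn : R.conflictGraph.Colorable n) :
    m * Fintype.card (Vertex m k) ^ 2 ≤ n := by
  obtain ⟨C⟩ := hn
  let rootPairs : Finset {P : Sym2 (Vertex m (k + 1)) // ¬ P.IsDiag} := {P | P.1.Separates {root}}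
  have hlt (c) (hc : c ∉ rootPairs.image C) : ∑ P with C P = c, crossings P.1 < m := by
    have heven : Even (∑ P with C P = c, crossings P.1) := even_sum _ fun P hP =>
      even_crossings fun hsep =>
        hc (mem_image.2 ⟨P, by simpa [rootPairs] using hsep, by simpa using hP⟩)
    exact (sum_crossings_le C c).lt_of_ne fun h => Nat.not_even_iff_odd.2 hm (h ▸ heven)
  have hcount := sum_le_of_sum_fiber_le C _ rootPairs m (sum_crossings_le C) hlt
  rw [sum_crossings, Fintype.card_fin, card_separates_eq, Fintype.card_compl_set,
    card_vertex_succ] at hcount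
  simp only [Fintype.card_unique, add_tsub_cancel_left, one_mul] at hcount
  set S := Fintype.card (Vertex m k)
  obtain ⟨j, rfl⟩ : ∃ j, m = j + 1 := ⟨m - 1, by omega⟩
  rw [add_one_mul j S, show 1 + (j * S + S) - S = 1 + j * S by omega, Nat.add_sub_cancel,
    show (j + 1) * (S * (1 + j * S)) = j * ((j + 1) * S ^ 2) + (j + 1) * S by ring,
    ← add_one_mul j S] at hcount
  exact Nat.le_of_mul_le_mul_left (by omega : j * _ ≤ j * n) (by omega)

end LowerBound

section UpperBound

def anchor (x y : Vertex m h) : Vertex m h := if x = root then y else x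

variable [NeZero m]

-- `coord root` is a junk value, never used by `pairCoord`.
def coord (x : Vertex m (k + 1)) : Fin m ×ₗ Vertex m k :=
  toLex ((decompose x).getD (0, root))

theorem decompose_eq_some_coord {x : Vertex m (k + 1)} (hx : x ≠ root) :
    decompose x = some (ofLex (coord x)) := by
  obtain ⟨p, hp⟩ := Option.ne_none_iff_exists'.1 fun h => hx (decompose.injective (h.trans rfl))
  simp [coord, hp]

theorem getLast?_eq_some_coord {x : Vertex m (k + 1)} (hx : x ≠ root) :
    x.val.getLast? = some (ofLex (coord x)).1 := by
  simpa [decompose, Option.map_map, Function.comp_def] using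
    congrArg (Option.map Prod.fst) (decompose_eq_some_coord hx)

theorem fst_coord_of_mem_subtree {w u : Vertex m (k + 1)} (hw : w ≠ root) (hu : u ∈ subtree w) :
    (ofLex (coord u)).1 = (ofLex (coord w)).1 := by
  obtain ⟨t, ht⟩ := hu
  have hwne : w.val ≠ [] := fun h => hw (Subtype.ext h)
  apply Option.some.inj
  rw [← getLast?_eq_some_coord hw,
    ← getLast?_eq_some_coord (ne_root_of_mem_subtree hw ⟨t, ht⟩), ← ht,
    List.getLast?_append_of_ne_nil _ hwne]

def pairCoord : Sym2 (Vertex m (k + 1)) → Sym2 (Fin m ×ₗ Vertex m k) :=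
  Sym2.lift ⟨fun x y => s(coord (anchor x y), coord (anchor y x)), fun _ _ => Sym2.eq_swap⟩

def pairOfCoord : Sym2 (Fin m ×ₗ Vertex m k) → Sym2 (Vertex m (k + 1)) :=
  Sym2.lift ⟨fun a b => if a = b then s(root, decompose.symm (some (ofLex a)))
      else s(decompose.symm (some (ofLex a)), decompose.symm (some (ofLex b))),
    fun a b => by
      dsimp only
      by_cases hab : a = b
      · subst hab; rfl
      · rw [if_neg hab, if_neg (Ne.symm hab), Sym2.eq_swap]⟩

theorem decompose_symm_coord {x : Vertex m (k + 1)} (hx : x ≠ root) :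
    decompose.symm (some (ofLex (coord x))) = x := by
  rw [← decompose_eq_some_coord hx, Equiv.symm_apply_apply]

theorem pairOfCoord_pairCoord {P : Sym2 (Vertex m (k + 1))} (hP : ¬ P.IsDiag) :
    pairOfCoord (pairCoord P) = P := by
  induction P using Sym2.ind with
  | h x y =>
    have hxy : x ≠ y := fun h => hP (Sym2.mk_isDiag_iff.2 h)
    by_cases hx : x = root
    · subst hx
      simp [pairCoord, pairOfCoord, anchor, hxy.symm, decompose_symm_coord hxy.symm]
    by_cases hy : y = root
    · subst hy
      simp [pairCoord, pairOfCoord, anchor, hx, decompose_symm_coord hx, Sym2.eq_swap]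
    have hc : coord x ≠ coord y := fun h =>
      hxy (by rw [← decompose_symm_coord hx, h, decompose_symm_coord hy])
    simp [pairCoord, pairOfCoord, anchor, hx, hy, hc, decompose_symm_coord hx,
      decompose_symm_coord hy]

theorem exists_pairCoord_eq_of_separates {w : Vertex m (k + 1)} (hw : w ≠ root)
    {P : Sym2 (Vertex m (k + 1))} (hP : P.Separates (subtree w)) :
    ∃ a b, pairCoord P = s(a, b) ∧ (ofLex a).1 = (ofLex (coord w)).1 := by
  induction P using Sym2.ind with
  | h x y =>
    rcases hP with ⟨hx, -⟩ | ⟨hy, -⟩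
    · refine ⟨coord x, coord (anchor y x), ?_, fst_coord_of_mem_subtree hw hx⟩
      simp [pairCoord, anchor, ne_root_of_mem_subtree hw hx]
    · refine ⟨coord y, coord (anchor x y), ?_, fst_coord_of_mem_subtree hw hy⟩
      simp [pairCoord, anchor, ne_root_of_mem_subtree hw hy, Sym2.eq_swap]

noncomputable def coloring (R : Routing (completeMAryTree m (k + 1))) :
    R.conflictGraph.Coloring (Fin m × Vertex m k × Vertex m k) :=
  Coloring.mk (fun P => lexColor (pairCoord P.1)) fun {P Q} hadj hcol => by
    obtain ⟨hne, u, v, u', v', e, hP, hQ, he, he'⟩ := hadj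
    obtain ⟨w, hw, rfl⟩ := exists_eq_up_of_mem_edgeSet ((R.path u v).edges_subset_edgeSet he)
    obtain ⟨a, b, hab, ha⟩ := exists_pairCoord_eq_of_separates hw
      (hP ▸ (mem_edges_iff_separates hw (R.isPath u v).isTrail).1 he)
    obtain ⟨a', b', hab', ha'⟩ := exists_pairCoord_eq_of_separates hw
      (hQ ▸ (mem_edges_iff_separates hw (R.isPath u' v').isTrail).1 he')
    rw [hab, hab'] at hcol
    refine hne (Subtype.ext ?_)
    rw [← pairOfCoord_pairCoord P.2, ← pairOfCoord_pairCoord Q.2, hab, hab',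
      eq_of_lexColor_eq hcol (ha.trans ha'.symm)]

theorem colorable_conflictGraph (R : Routing (completeMAryTree m (k + 1))) :
    R.conflictGraph.Colorable (m * Fintype.card (Vertex m k) ^ 2) := by
  simpa [sq] using (coloring R).colorable

end UpperBound

end MAryTree

/-- for every odd integer `m ≥ 3` and every positive integer `h`, the
undirected optical index of the complete `m`-ary tree of height `h` equals
`m·(1 + m + m² + … + m^(h−1))²`. -/
theorem opticalIndex_mAryTree_odd (m h : ℕ) (hm : Odd m) (hm3 : 3 ≤ m) (hh : 1 ≤ h) :
    opticalIndex (completeMAryTree m h) = m * (∑ i ∈ Finset.range h, m ^ i) ^ 2 := by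
  obtain ⟨k, rfl⟩ := Nat.exists_eq_add_of_le' hh
  have : NeZero m := ⟨by omega⟩
  obtain ⟨R⟩ := Routing.nonempty_of_connected (MAryTree.connected (m := m) (h := k + 1))
  rw [← MAryTree.card_vertex]
  refine le_antisymm (Nat.sInf_le ⟨R, MAryTree.colorable_conflictGraph R⟩) ?_
  refine le_csInf ⟨_, R, MAryTree.colorable_conflictGraph R⟩ fun n ⟨R', hR'⟩ => ?_
  exact MAryTree.mul_card_sq_le_of_colorable hm (by omega) R' hR'
end

section
/- Let k ≥ 3 be an odd integer and t a positive integer. Let G be any connected simple graph having a cut vertex r such that G − r has exactly k connected components, each containing exactly t vertices and each joined to r by exactly one edge. Then the undirected optical index of G equals k·t^2. -/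
open SimpleGraph

/-! Label the vertices `v ≠ r` by pairs `(c, i) ∈ Fin k × Fin t`, where `c` indexes the
component of `G − r` containing `v` and `i` numbers `v` inside it.

Upper bound, valid for every routing: give the path between `u` and `v` the colour
`(c(u) + c(v) mod k, ranks of u and v in lexicographic order of their labels)`. Two paths
sharing an edge share a vertex `z ≠ r`, and since a path meets `r` at most once, each has an
endpoint in the component of `z`; once the component of one endpoint is known, the colour
determines the pair.

Lower bound: a path between two components of `G − r` uses the unique edges joining both to
`r`. Among the `k t² (k - 1)` ordered pairs in different components, those of one colour have
distinct first components and are closed under swapping, so there are at most `k - 1` of them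
because `k` is odd. -/

theorem Finset.even_card_of_involution {α : Type*} (s : Finset α) (g : α → α)
    (hmem : ∀ a ∈ s, g a ∈ s) (hinv : ∀ a ∈ s, g (g a) = a)
    (hfree : ∀ a ∈ s, g a ≠ a) :
    Even s.card := by
  rw [← ZMod.natCast_eq_zero_iff_even, Finset.card_eq_sum_ones, Nat.cast_sum, Nat.cast_one]
  exact Finset.sum_involution (fun a _ => g a) (fun _ _ => by decide) (fun a ha _ => hfree a ha)
    hmem hinv

section CrossPairs

variable {α ι β : Type*} [Finite α]

abbrev CrossPairs (φ : α → ι) := {x : α × α // φ x.1 ≠ φ x.2}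

theorem card_crossPairs (φ : α → ι) {t : ℕ} (hfib : ∀ i, Nat.card {a // φ a = i} = t) :
    Nat.card (CrossPairs φ) = Nat.card α * (Nat.card α - t) := by
  classical
  have := Fintype.ofFinite α
  have hcompl (a : α) : Nat.card {b // φ a ≠ φ b} = Nat.card α - t := by
    simp only [Nat.card_eq_fintype_card, ← hfib (φ a), ne_comm (a := φ a)]
    exact Fintype.card_subtype_compl _
  rw [Nat.card_congr (Equiv.subtypeProdEquivSigmaSubtype fun a b => φ a ≠ φ b), Nat.card_sigma]
  simp only [hcompl, Finset.sum_const, Finset.card_univ, smul_eq_mul, Nat.card_eq_fintype_card]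

theorem card_crossPairs_le [Finite ι] [Finite β] (φ : α → ι) (hodd : Odd (Nat.card ι))
    (f : CrossPairs φ → β) (hswap : ∀ x, f ⟨x.1.swap, x.2.symm⟩ = f x)
    (hinj : ∀ x y, f x = f y → φ x.1.1 = φ y.1.1 → x = y) :
    Nat.card (CrossPairs φ) ≤ Nat.card β * (Nat.card ι - 1) := by
  classical
  have := Fintype.ofFinite α
  have := Fintype.ofFinite ι
  have := Fintype.ofFinite β
  have hfiber (b : β) : (Finset.univ.filter (f · = b)).card ≤ Nat.card ι - 1 := by
    have hle : (Finset.univ.filter (f · = b)).card ≤ Nat.card ι := by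
      rw [Nat.card_eq_fintype_card, ← Finset.card_univ]
      refine Finset.card_le_card_of_injOn (fun x => φ x.1.1)
        (fun _ _ => Finset.mem_coe.2 (Finset.mem_univ _)) fun x hx y hy hxy => ?_
      simp only [Finset.coe_filter, Finset.mem_univ, true_and, Set.mem_ofPred_eq] at hx hy
      exact hinj x y (hx.trans hy.symm) hxy
    have heven : Even (Finset.univ.filter (f · = b)).card := by
      refine Finset.even_card_of_involution _ (fun x => ⟨x.1.swap, x.2.symm⟩)
        (fun x hx => by simpa [hswap] using hx) (fun _ _ => rfl) fun x _ h => ?_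
      exact x.2 (congrArg (fun y => φ y.1.1) h).symm
    obtain ⟨m, hm⟩ := hodd
    obtain ⟨j, hj⟩ := heven
    omega
  rw [Nat.card_eq_fintype_card, Finset.card_univ.symm,
    Finset.card_eq_sum_card_fiberwise (f := f) (t := Finset.univ) (fun _ _ => Finset.mem_univ _)]
  calc ∑ b, (Finset.univ.filter (f · = b)).card ≤ ∑ _b : β, (Nat.card ι - 1) :=
        Finset.sum_le_sum fun b _ => hfiber b
    _ = Nat.card β * (Nat.card ι - 1) := by simp [Nat.card_eq_fintype_card]

end CrossPairs

theorem exists_equiv_fin_prod_of_card_fiber {α ι : Type*} [Finite α] [Finite ι] (φ : α → ι)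
    {k t : ℕ} (hι : Nat.card ι = k) (hfib : ∀ i, Nat.card {a // φ a = i} = t) :
    ∃ e : α ≃ Fin k × Fin t, ∀ a b, φ a = φ b → (e a).1 = (e b).1 := by
  let e := (Equiv.sigmaFiberEquiv φ).symm.trans <|
    (Equiv.sigmaCongrRight fun i => Finite.equivFinOfCardEq (hfib i)).trans <|
    (Equiv.sigmaEquivProd ι (Fin t)).trans
    (Equiv.prodCongr (Finite.equivFinOfCardEq hι) (.refl _))
  exact ⟨e, fun a b h => by simp [e, h]⟩

section PairColor

variable {k t : ℕ}

def pairColor (a b : Fin k × Fin t) : Fin k × Fin t × Fin t :=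
  (a.1 + b.1, if toLex a ≤ toLex b then (a.2, b.2) else (b.2, a.2))

theorem pairColor_comm (a b : Fin k × Fin t) : pairColor a b = pairColor b a := by
  unfold pairColor
  rw [add_comm]
  split_ifs with h₁ h₂ h₂
  · rw [toLex_inj.mp (le_antisymm h₁ h₂)]
  · rfl
  · rfl
  · exact absurd (le_total (toLex a) (toLex b)) (by tauto)

/- Knowing the component index of one endpoint, the sum mod `k` gives that of the other, and
the lexicographic order then tells which rank belongs to which endpoint. -/
theorem mk_eq_mk_of_pairColor_eq {a b a' b' : Fin k × Fin t}
    (h : pairColor a b = pairColor a' b') (ha : a.1 = a'.1) : s(a, b) = s(a', b') := by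
  unfold pairColor at h
  simp only [Prod.mk.injEq, ha, add_right_inj, Prod.Lex.toLex_le_toLex] at h
  obtain ⟨hb, h⟩ := h
  rw [Sym2.eq_iff]
  split_ifs at h <;> simp only [Prod.mk.injEq] at h <;> grind [Prod.ext_iff]

/- The root borrows the label of its partner, so `{r, v}` is coloured like the loop `{v, v}`. -/
def pairColorAt {V : Type*} [DecidableEq V] (r : V) (ℓ : V → Fin k × Fin t) (u v : V) :
    Fin k × Fin t × Fin t :=
  pairColor (if u = r then ℓ v else ℓ u) (if v = r then ℓ u else ℓ v)

variable {V : Type*} [DecidableEq V] {r : V} {ℓ : V → Fin k × Fin t}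

theorem pairColorAt_comm (u v : V) : pairColorAt r ℓ u v = pairColorAt r ℓ v u :=
  pairColor_comm _ _

theorem mk_eq_mk_of_pairColorAt_eq (hℓ : ∀ a b, a ≠ r → b ≠ r → ℓ a = ℓ b → a = b)
    {a b a' b' : V} (h : pairColorAt r ℓ a b = pairColorAt r ℓ a' b') (ha : a ≠ r)
    (ha' : a' ≠ r) (hab : a ≠ b) (hab' : a' ≠ b') (h₁ : (ℓ a).1 = (ℓ a').1) :
    s(a, b) = s(a', b') := by
  unfold pairColorAt at h
  have := mk_eq_mk_of_pairColor_eq h (by simpa only [if_neg ha, if_neg ha'] using h₁)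
  simp only [if_neg ha, if_neg ha', Sym2.eq_iff] at this ⊢
  split_ifs at this <;> grind

end PairColor

namespace SimpleGraph

variable {V : Type*} {G : SimpleGraph V}

theorem Walk.connectedComponentMk_induce_eq {s : Set V} {a b : s} (W : G.Walk a b)
    (hW : ∀ x ∈ W.support, x ∈ s) :
    (G.induce s).connectedComponentMk a = (G.induce s).connectedComponentMk b :=
  ConnectedComponent.eq.mpr ⟨W.induce s hW⟩

theorem Walk.exists_mem_edges_of_connectedComponentMk_ne {s : Set V} {u v : V} (W : G.Walk u v)
    (hu : u ∈ s) (hv : v ∈ s)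
    (h : (G.induce s).connectedComponentMk ⟨u, hu⟩ ≠
      (G.induce s).connectedComponentMk ⟨v, hv⟩) :
    ∃ (w : s) (x : V), x ∉ s ∧
      (G.induce s).connectedComponentMk w = (G.induce s).connectedComponentMk ⟨u, hu⟩ ∧
      s(↑w, x) ∈ W.edges := by
  induction W with
  | nil => exact absurd rfl h
  | @cons u u₁ v hadj W ih =>
    by_cases hu₁ : u₁ ∈ s
    · have hcc : (G.induce s).connectedComponentMk ⟨u₁, hu₁⟩ =
          (G.induce s).connectedComponentMk ⟨u, hu⟩ :=
        ConnectedComponent.connectedComponentMk_eq_of_adj (G := G.induce s) hadj.symm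
      obtain ⟨w, x, hx, hw, he⟩ := ih hu₁ hv (hcc ▸ h)
      exact ⟨w, x, hx, hw.trans hcc, List.mem_cons_of_mem _ he⟩
    · exact ⟨⟨u, hu⟩, u₁, hu₁, rfl, by simp⟩

variable {r : V}

theorem Walk.exists_ne_mem_support_of_mem_edges {u v u' v' : V} {e : Sym2 V} {W : G.Walk u v}
    {W' : G.Walk u' v'} (he : e ∈ W.edges) (he' : e ∈ W'.edges) :
    ∃ z : {v // v ≠ r}, ↑z ∈ W.support ∧ ↑z ∈ W'.support := by
  induction e using Sym2.ind with
  | _ x y =>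
  by_cases hx : x = r
  · have hy : y ≠ r := hx ▸ (W.adj_of_mem_edges he).ne.symm
    exact ⟨⟨y, hy⟩, W.snd_mem_support_of_mem_edges he, W'.snd_mem_support_of_mem_edges he'⟩
  · exact ⟨⟨x, hx⟩, W.fst_mem_support_of_mem_edges he, W'.fst_mem_support_of_mem_edges he'⟩

theorem Walk.IsPath.notMem_support_takeUntil_or_dropUntil [DecidableEq V] {u v x : V}
    {W : G.Walk u v} (hW : W.IsPath) (hx : x ∈ W.support) (hrx : r ≠ x) :
    r ∉ (W.takeUntil x hx).support ∨ r ∉ (W.dropUntil x hx).support := by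
  by_contra! h
  have hnodup := hW.support_nodup
  rw [← W.take_spec hx, Walk.support_append] at hnodup
  have hr : r ∈ (W.dropUntil x hx).support.tail := by
    have := h.2
    rw [← Walk.cons_tail_support] at this
    exact (List.mem_cons.mp this).resolve_left hrx
  exact List.disjoint_of_nodup_append hnodup h.1 hr

theorem Walk.IsPath.exists_mem_connectedComponentMk_eq {u v : V} {W : G.Walk u v}
    (hW : W.IsPath) (x : {v // v ≠ r}) (hx : ↑x ∈ W.support) :
    ∃ a : {v // v ≠ r}, ↑a ∈ s(u, v) ∧
      (G.induce {v | v ≠ r}).connectedComponentMk a =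
        (G.induce {v | v ≠ r}).connectedComponentMk x := by
  classical
  have avoid {a b : V} (W' : G.Walk a b) (h : r ∉ W'.support) :
      ∀ y ∈ W'.support, y ∈ {v | v ≠ r} :=
    fun y hy hyr => h (hyr ▸ hy)
  rcases hW.notMem_support_takeUntil_or_dropUntil hx (Ne.symm x.2) with h | h
  · have hu : u ≠ r := ne_of_mem_of_not_mem (Walk.start_mem_support _) h
    exact ⟨⟨u, hu⟩, Sym2.mem_mk_left u v,
      Walk.connectedComponentMk_induce_eq (W.takeUntil x hx) (avoid _ h)⟩
  · have hv : v ≠ r := ne_of_mem_of_not_mem (Walk.end_mem_support _) h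
    exact ⟨⟨v, hv⟩, Sym2.mem_mk_right u v,
      (Walk.connectedComponentMk_induce_eq (W.dropUntil x hx) (avoid _ h)).symm⟩

theorem Walk.exists_mem_edges_of_connectedComponentMk_eq
    (hgate : ∀ w w' : {v // v ≠ r}, (G.induce {v | v ≠ r}).connectedComponentMk w =
      (G.induce {v | v ≠ r}).connectedComponentMk w' → G.Adj r w → G.Adj r w' → w = w')
    {u v u' v' : {v // v ≠ r}} (W : G.Walk u v) (W' : G.Walk u' v')
    (huv : (G.induce {v | v ≠ r}).connectedComponentMk u ≠
      (G.induce {v | v ≠ r}).connectedComponentMk v)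
    (hu'v' : (G.induce {v | v ≠ r}).connectedComponentMk u' ≠
      (G.induce {v | v ≠ r}).connectedComponentMk v')
    (huu' : (G.induce {v | v ≠ r}).connectedComponentMk u =
      (G.induce {v | v ≠ r}).connectedComponentMk u') :
    ∃ e, e ∈ W.edges ∧ e ∈ W'.edges := by
  obtain ⟨w, x, hx, hw, he⟩ := W.exists_mem_edges_of_connectedComponentMk_ne u.2 v.2 huv
  obtain ⟨w', x', hx', hw', he'⟩ :=
    W'.exists_mem_edges_of_connectedComponentMk_ne u'.2 v'.2 hu'v'
  simp only [Set.mem_ofPred_eq, not_not] at hx hx'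
  subst hx hx'
  have hww' : w = w' := hgate w w' (hw.trans (huu'.trans hw'.symm))
    (W.adj_of_mem_edges he).symm (W'.adj_of_mem_edges he').symm
  exact ⟨_, he, hww' ▸ he'⟩

end SimpleGraph

section Routing

variable {V : Type*} {G : SimpleGraph V} {r : V}

theorem Routing.colorable_of_labelling {k t : ℕ} (R : Routing G) (ℓ : V → Fin k × Fin t)
    (hℓ : ∀ a b, a ≠ r → b ≠ r → ℓ a = ℓ b → a = b)
    (hcc : ∀ a b : {v // v ≠ r}, (G.induce {v | v ≠ r}).connectedComponentMk a =
      (G.induce {v | v ≠ r}).connectedComponentMk b → (ℓ a).1 = (ℓ b).1) :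
    R.conflictGraph.Colorable (k * t ^ 2) := by
  classical
  let χ : Sym2 V → Fin k × Fin t × Fin t := Sym2.lift ⟨pairColorAt r ℓ, pairColorAt_comm⟩
  suffices hχ : ∀ p q, R.conflictGraph.Adj p q → χ p ≠ χ q by
    simpa [pow_two] using (Coloring.mk (fun p => χ p.1) (hχ _ _)).colorable
  rintro ⟨p, hp⟩ ⟨q, hq⟩ ⟨hpq, u, v, u', v', e, rfl, rfl, he, he'⟩ hχpq
  obtain ⟨z, hz, hz'⟩ := Walk.exists_ne_mem_support_of_mem_edges (r := r) he he'
  obtain ⟨a, ha, hza⟩ := (R.isPath u v).exists_mem_connectedComponentMk_eq z hz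
  obtain ⟨a', ha', hza'⟩ := (R.isPath u' v').exists_mem_connectedComponentMk_eq z hz'
  obtain ⟨b, hb⟩ := Sym2.mem_iff_exists.mp ha
  obtain ⟨b', hb'⟩ := Sym2.mem_iff_exists.mp ha'
  simp only [hb, hb', Sym2.mk_isDiag_iff] at hp hq hpq
  refine hpq (Subtype.ext ?_)
  simp only [χ, hb, hb', Sym2.lift_mk] at hχpq
  exact mk_eq_mk_of_pairColorAt_eq hℓ hχpq a.2 a'.2 hp hq (hcc _ _ (hza.trans hza'.symm))

theorem Routing.mul_sq_le_of_colorable [Finite V] (R : Routing G) {k t n : ℕ} (hk : 1 < k)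
    (hkodd : Odd k) (hcomp : Nat.card (G.induce {v | v ≠ r}).ConnectedComponent = k)
    (hsize : ∀ c : (G.induce {v | v ≠ r}).ConnectedComponent, Nat.card c.supp = t)
    (hedge : ∀ c : (G.induce {v | v ≠ r}).ConnectedComponent,
      Nat.card {v : {v : V // v ≠ r} | v ∈ c.supp ∧ G.Adj r v.val} = 1)
    (hR : R.conflictGraph.Colorable n) : k * t ^ 2 ≤ n := by
  obtain ⟨C⟩ := hR
  set φ := (G.induce {v | v ≠ r}).connectedComponentMk
  have hgate (w w' : {v // v ≠ r}) (h : φ w = φ w') (hw : G.Adj r w) (hw' : G.Adj r w') :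
      w = w' :=
    congrArg Subtype.val <| (Nat.card_eq_one_iff_unique.mp (hedge (φ w))).1.elim
      ⟨w, rfl, hw⟩ ⟨w', h.symm, hw'⟩
  have hdiag (x : CrossPairs φ) : ¬ s(x.1.1.val, x.1.2.val).IsDiag :=
    Sym2.mk_isDiag_iff.not.mpr fun h => x.2 (congrArg φ (Subtype.ext h))
  have hle := card_crossPairs_le φ (hcomp ▸ hkodd) (fun x => C ⟨_, hdiag x⟩)
    (fun x => congrArg C (Subtype.ext Sym2.eq_swap)) fun x y hxy h => by
      by_contra hne
      obtain ⟨e, he, he'⟩ := Walk.exists_mem_edges_of_connectedComponentMk_eq hgate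
        (R.path x.1.1 x.1.2) (R.path y.1.1 y.1.2) x.2 y.2 h
      refine C.valid ⟨fun hs => hne ?_, _, _, _, _, e, rfl, rfl, he, he'⟩ hxy
      rcases Sym2.eq_iff.mp (congrArg Subtype.val hs) with ⟨h₁, h₂⟩ | ⟨h₁, -⟩
      · exact Subtype.ext (Prod.ext (Subtype.ext h₁) (Subtype.ext h₂))
      · exact absurd (h.symm.trans (congrArg φ (Subtype.ext h₁))) y.2
  obtain ⟨e, -⟩ := exists_equiv_fin_prod_of_card_fiber φ hcomp hsize
  rw [card_crossPairs φ hsize, Nat.card_congr e, Nat.card_prod, Nat.card_fin, Nat.card_fin,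
    hcomp, Nat.card_fin] at hle
  obtain ⟨m, rfl⟩ : ∃ m, k = m + 1 := ⟨k - 1, by omega⟩
  have hcount : (m + 1) * t * ((m + 1) * t - t) = (m + 1) * t ^ 2 * m := by
    rw [add_one_mul m t, Nat.add_sub_cancel]
    ring
  exact Nat.le_of_mul_le_mul_right (hcount ▸ hle) (by omega)

end Routing

/-- if `k ≥ 3` is odd, `t ≥ 1`, and `G` is a connected simple graph with a
cut vertex `r` such that `G − r` has exactly `k` connected components, each with exactly
`t` vertices and each joined to `r` by exactly one edge, then `w(G) = k·t²`. -/
theorem opticalIndex_G_kt {V : Type*} [Fintype V] (G : SimpleGraph V) (hG : G.Connected)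
    (k t : ℕ) (hk : 3 ≤ k) (hkodd : Odd k) (ht : 1 ≤ t) (r : V)
    (hcomp : Nat.card (G.induce {v | v ≠ r}).ConnectedComponent = k)
    (hsize : ∀ c : (G.induce {v | v ≠ r}).ConnectedComponent, Nat.card c.supp = t)
    (hedge : ∀ c : (G.induce {v | v ≠ r}).ConnectedComponent,
      Nat.card {v : {v : V // v ≠ r} | v ∈ c.supp ∧ G.Adj r v.val} = 1) :
    opticalIndex G = k * t ^ 2 := by
  have : NeZero k := ⟨by omega⟩
  have : NeZero t := ⟨by omega⟩
  obtain ⟨R⟩ := hG.nonempty_routing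
  obtain ⟨e, he⟩ := exists_equiv_fin_prod_of_card_fiber _ hcomp hsize
  classical
  let ℓ (v : V) : Fin k × Fin t := if h : v = r then 0 else e ⟨v, h⟩
  refine IsLeast.csInf_eq ⟨⟨R, R.colorable_of_labelling (r := r) ℓ ?_ ?_⟩, ?_⟩
  · intro a b ha hb h
    simpa [ℓ, ha, hb] using h
  · rintro ⟨a, ha⟩ ⟨b, hb⟩ h
    simpa [ℓ, ha, hb] using he _ _ h
  · rintro n ⟨R', hR'⟩
    exact R'.mul_sq_le_of_colorable (by omega) hkodd hcomp hsize hedge hR'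
end
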